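/- arXiv:2408.12486 — 4 statements merged into one kernel-verified Lean document; each statement's English description precedes it below -/
import Mathlib

section
/- Let K be a group, N a normal subgroup of K, and f an automorphism of K such that f(y) = y for every y ∈ N. Suppose there exist elements a₁, a₂ ∈ K and positive integers n₁, n₂ such that a₁^{n₁} ∈ N and a₂^{n₂} ∈ N, the normalizer in K of the cyclic subgroup generated by a_i^{n_i} is contained in the cyclic subgroup generated by a_i (for i = 1, 2), and the cyclic subgroups generated by a₁ and by a₂ intersect trivially. Then f is the identity automorphism of K. -/
/-!
For `x ∈ K` and `y ∈ N`, the conjugate `x y x⁻¹` lies in `N`, so `f` fixes it; since `f` also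
fixes `y`, this says that `x⁻¹ f(x)` commutes with `y`. Taking `y = aᵢ ^ nᵢ`, the element
`x⁻¹ f(x)` normalizes `⟨aᵢ ^ nᵢ⟩`, hence lies in `⟨aᵢ⟩` for both `i`, hence is trivial.
-/

open Subgroup

theorem Subgroup.mem_normalizer_zpowers_of_commute {G : Type*} [Group G] {g b : G}
    (h : Commute g b) : g ∈ normalizer (zpowers b : Set G) := by
  apply centralizer_le_normalizer
  rw [zpowers_eq_closure, centralizer_closure, mem_centralizer_singleton_iff]
  exact h.eq

theorem MonoidHom.commute_inv_mul_apply_of_eqOn_normal {K : Type*} [Group K] {N : Subgroup K}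
    [N.Normal] (f : K →* K) (hf : ∀ y ∈ N, f y = y) (x : K) {y : K} (hy : y ∈ N) :
    Commute (x⁻¹ * f x) y := by
  have hconj : f x * y * (f x)⁻¹ = x * y * x⁻¹ := by
    simpa only [map_mul, map_inv, hf y hy] using hf _ (Normal.conj_mem ‹_› y hy x)
  calc x⁻¹ * f x * y = x⁻¹ * (f x * y * (f x)⁻¹) * f x := by group
    _ = x⁻¹ * (x * y * x⁻¹) * f x := by rw [hconj]
    _ = y * (x⁻¹ * f x) := by group

theorem MonoidHom.inv_mul_apply_mem_zpowers {K : Type*} [Group K] {N : Subgroup K} [N.Normal]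
    (f : K →* K) (hf : ∀ y ∈ N, f y = y) (x : K) {a : K} {n : ℕ} (ha : a ^ n ∈ N)
    (hnorm : normalizer (zpowers (a ^ n) : Set K) ≤ zpowers a) :
    x⁻¹ * f x ∈ zpowers a :=
  hnorm <| mem_normalizer_zpowers_of_commute <| f.commute_inv_mul_apply_of_eqOn_normal hf x ha

theorem auto_fixing_normal_subgroup_is_id_general
    {K : Type*} [Group K] (N : Subgroup K) [N.Normal]
    (f : K ≃* K) (hf : ∀ y ∈ N, f y = y)
    (a₁ a₂ : K) (n₁ n₂ : ℕ)
    (ha₁ : a₁ ^ n₁ ∈ N) (ha₂ : a₂ ^ n₂ ∈ N)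
    (hnorm₁ : Subgroup.normalizer (Subgroup.zpowers (a₁ ^ n₁) : Set K) ≤ Subgroup.zpowers a₁)
    (hnorm₂ : Subgroup.normalizer (Subgroup.zpowers (a₂ ^ n₂) : Set K) ≤ Subgroup.zpowers a₂)
    (hinter : Subgroup.zpowers a₁ ⊓ Subgroup.zpowers a₂ = ⊥) :
    ∀ x : K, f x = x := by
  intro x
  have h₁ := f.toMonoidHom.inv_mul_apply_mem_zpowers hf x ha₁ hnorm₁
  have h₂ := f.toMonoidHom.inv_mul_apply_mem_zpowers hf x ha₂ hnorm₂
  have htriv : x⁻¹ * f x ∈ (⊥ : Subgroup K) := hinter ▸ mem_inf.mpr ⟨h₁, h₂⟩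
  exact (inv_mul_eq_one.mp (mem_bot.mp htriv)).symm

/-- Group-theoretic core of Lemma 3.2 ("restriction"): an automorphism of a group `K`
that restricts to the identity on a normal subgroup `N` containing suitable powers of
two elements whose cyclic subgroups have small normalizers and trivial intersection
must be the identity. -/
theorem auto_fixing_normal_subgroup_is_id
    {K : Type*} [Group K] (N : Subgroup K) [N.Normal]
    (f : K ≃* K) (hf : ∀ y ∈ N, f y = y)
    (a₁ a₂ : K) (n₁ n₂ : ℕ) (hn₁ : 0 < n₁) (hn₂ : 0 < n₂)
    (ha₁ : a₁ ^ n₁ ∈ N) (ha₂ : a₂ ^ n₂ ∈ N)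
    (hnorm₁ : Subgroup.normalizer (Subgroup.zpowers (a₁ ^ n₁) : Set K) ≤ Subgroup.zpowers a₁)
    (hnorm₂ : Subgroup.normalizer (Subgroup.zpowers (a₂ ^ n₂) : Set K) ≤ Subgroup.zpowers a₂)
    (hinter : Subgroup.zpowers a₁ ⊓ Subgroup.zpowers a₂ = ⊥) :
    ∀ x : K, f x = x :=
  auto_fixing_normal_subgroup_is_id_general N f hf a₁ a₂ n₁ n₂ ha₁ ha₂ hnorm₁ hnorm₂ hinter
end

section
/- Let K be a profinite group (a compact, Hausdorff, totally disconnected topological group), N an open normal subgroup of K, and f a continuous automorphism of K such that f(y) = y for every y ∈ N. Suppose there exist elements a₁, a₂ ∈ K such that: (i) for every positive integer n and each i = 1, 2, the normalizer in K of the topological closure of the cyclic subgroup generated by a_i^{n} is contained in the topological closure of the cyclic subgroup generated by a_i; and (ii) the topological closures of the cyclic subgroups generated by a₁ and by a₂ intersect trivially. Then f is the identity automorphism of K. -/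
/-!
An automorphism `f` fixing the normal subgroup `N` pointwise moves every `x` by an element
`x⁻¹ * f x` that centralizes `N`. Some power `aᵢⁿ` lies in `N` because `N` has finite index,
so `x⁻¹ * f x` commutes with `aᵢⁿ` and hence normalizes the closure of `⟨aᵢⁿ⟩`; by hypothesis
it then lies in the closure of `⟨aᵢ⟩` for both `i`, and these closures meet trivially.
-/

open Subgroup

section

variable {G : Type*} [Group G]

theorem Subgroup.Normal.commute_inv_mul_apply {F : Type*} [FunLike F G G] [MonoidHomClass F G G]
    {N : Subgroup G} (hN : N.Normal) (f : F) (hf : ∀ y ∈ N, f y = y) (x : G) {y : G}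
    (hy : y ∈ N) : Commute y (x⁻¹ * f x) := by
  have hconj : f x * y * (f x)⁻¹ = x * y * x⁻¹ := calc
    f x * y * (f x)⁻¹ = f (x * y * x⁻¹) := by rw [map_mul, map_mul, map_inv, hf y hy]
    _ = x * y * x⁻¹ := hf _ (hN.conj_mem y hy x)
  calc y * (x⁻¹ * f x) = x⁻¹ * (x * y * x⁻¹) * f x := by group
    _ = x⁻¹ * (f x * y * (f x)⁻¹) * f x := by rw [hconj]
    _ = x⁻¹ * f x * y := by group

variable [TopologicalSpace G] [IsTopologicalGroup G]

theorem Subgroup.exists_pow_mem_of_isOpen [CompactSpace G] {N : Subgroup G}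
    (hN : IsOpen (N : Set G)) (a : G) : ∃ n : ℕ, 0 < n ∧ a ^ n ∈ N := by
  have : Finite (G ⧸ N) := quotient_finite_of_isOpen N hN
  obtain ⟨n, hn, -, ha⟩ := exists_pow_mem_of_index_ne_zero (index_ne_zero_of_finite (H := N)) a
  exact ⟨n, hn, ha⟩

theorem Subgroup.conj_mem_topologicalClosure_of_mem_normalizer {H : Subgroup G} {g h : G}
    (hg : g ∈ normalizer (H : Set G)) (hh : h ∈ H.topologicalClosure) :
    g * h * g⁻¹ ∈ H.topologicalClosure :=
  map_mem_closure (f := fun x ↦ g * x * g⁻¹) (IsTopologicalGroup.continuous_conj g) hh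
    fun m hm ↦ (mem_normalizer_iff.mp hg m).mp hm

theorem Subgroup.normalizer_le_normalizer_topologicalClosure (H : Subgroup G) :
    normalizer (H : Set G) ≤ normalizer (H.topologicalClosure : Set G) := by
  refine fun g hg ↦ mem_normalizer_iff.mpr fun h ↦
    ⟨conj_mem_topologicalClosure_of_mem_normalizer hg, fun hh ↦ ?_⟩
  simpa [mul_assoc] using conj_mem_topologicalClosure_of_mem_normalizer (inv_mem hg) hh

theorem Commute.mem_normalizer_topologicalClosure_zpowers {g d : G} (h : Commute g d) :
    d ∈ normalizer ((zpowers g).topologicalClosure : Set G) := by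
  refine normalizer_le_normalizer_topologicalClosure _ (centralizer_le_normalizer _ ?_)
  rw [mem_centralizer_iff]
  rintro _ ⟨k, rfl⟩
  exact (h.zpow_left k).eq

end

theorem profinite_auto_fixing_open_normal_subgroup_is_id_general
    {K : Type*} [Group K] [TopologicalSpace K] [IsTopologicalGroup K]
    [CompactSpace K]
    (N : Subgroup K) [N.Normal] (hNopen : IsOpen (N : Set K))
    (f : K ≃* K) (hf : ∀ y ∈ N, f y = y)
    (a₁ a₂ : K)
    (hnorm₁ : ∀ n : ℕ, 0 < n →
      Subgroup.normalizer (((Subgroup.zpowers (a₁ ^ n)).topologicalClosure : Subgroup K) : Set K) ≤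
        (Subgroup.zpowers a₁).topologicalClosure)
    (hnorm₂ : ∀ n : ℕ, 0 < n →
      Subgroup.normalizer (((Subgroup.zpowers (a₂ ^ n)).topologicalClosure : Subgroup K) : Set K) ≤
        (Subgroup.zpowers a₂).topologicalClosure)
    (hinter : (Subgroup.zpowers a₁).topologicalClosure ⊓
        (Subgroup.zpowers a₂).topologicalClosure = ⊥) :
    ∀ x : K, f x = x := by
  intro x
  have hmem {a : K} (hnorm : ∀ n : ℕ, 0 < n → normalizer
      ((zpowers (a ^ n)).topologicalClosure : Set K) ≤ (zpowers a).topologicalClosure) :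
      x⁻¹ * f x ∈ (zpowers a).topologicalClosure := by
    obtain ⟨n, hn, han⟩ := exists_pow_mem_of_isOpen hNopen a
    exact hnorm n hn
      (‹N.Normal›.commute_inv_mul_apply f hf x han).mem_normalizer_topologicalClosure_zpowers
  have hone : x⁻¹ * f x = 1 := by
    simpa [hinter] using mem_inf.mpr ⟨hmem hnorm₁, hmem hnorm₂⟩
  rwa [inv_mul_eq_one, eq_comm] at hone

/-- Profinite version of Lemma 3.2 ("restriction"): a continuous automorphism of a
profinite group `K` that restricts to the identity on an open normal subgroup `N`,
where `a₁, a₂` are elements whose procyclic closures have trivial intersection and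
the normalizer of the closure of `⟨aᵢⁿ⟩` is contained in the closure of `⟨aᵢ⟩`,
must be the identity. -/
theorem profinite_auto_fixing_open_normal_subgroup_is_id
    {K : Type*} [Group K] [TopologicalSpace K] [IsTopologicalGroup K]
    [CompactSpace K] [T2Space K] [TotallyDisconnectedSpace K]
    (N : Subgroup K) [N.Normal] (hNopen : IsOpen (N : Set K))
    (f : K ≃* K) (hfcont : Continuous f) (hf : ∀ y ∈ N, f y = y)
    (a₁ a₂ : K)
    (hnorm₁ : ∀ n : ℕ, 0 < n →
      Subgroup.normalizer (((Subgroup.zpowers (a₁ ^ n)).topologicalClosure : Subgroup K) : Set K) ≤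
        (Subgroup.zpowers a₁).topologicalClosure)
    (hnorm₂ : ∀ n : ℕ, 0 < n →
      Subgroup.normalizer (((Subgroup.zpowers (a₂ ^ n)).topologicalClosure : Subgroup K) : Set K) ≤
        (Subgroup.zpowers a₂).topologicalClosure)
    (hinter : (Subgroup.zpowers a₁).topologicalClosure ⊓
        (Subgroup.zpowers a₂).topologicalClosure = ⊥) :
    ∀ x : K, f x = x :=
  profinite_auto_fixing_open_normal_subgroup_is_id_general N hNopen f hf a₁ a₂ hnorm₁ hnorm₂ hinter
end

section
/- Let A be a finitely generated abelian group, B a subgroup of A, and C a subgroup of B of finite index in B. Then there exists a subgroup D of A of finite index in A such that D ∩ B ≤ C. Consequently, the profinite topology of A induces on B its full profinite topology. -/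
/-!
Pass to the finitely generated abelian group `A ⧸ C`, in which the image of `B` is finite and hence
consists of torsion elements. By the structure theorem, `A ⧸ C ≃ ℤʳ × T` with `T` finite, and the
kernel of the projection to `T` is a finite-index subgroup meeting the torsion trivially; its
preimage `D` in `A` satisfies `D ⊓ B ≤ C`.
-/

lemma CommGroup.exists_finiteIndex_disjoint_torsion (G : Type*) [CommGroup G] [Group.FG G] :
    ∃ K : Subgroup G, K.FiniteIndex ∧ Disjoint K (CommGroup.torsion G) := by
  obtain ⟨ι, j, _, _, p, hp, e, ⟨φ⟩⟩ := CommGroup.equiv_free_prod_prod_multiplicative_zmod G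
  have : ∀ i, NeZero (p i ^ e i) := fun i => ⟨pow_ne_zero _ (hp i).ne_zero⟩
  let π := (MonoidHom.snd _ _).comp φ.toMonoidHom
  refine ⟨π.ker, inferInstance, Subgroup.disjoint_def.mpr fun {g} hg hfo => ?_⟩
  have hfree : (φ g).1 = 1 :=
    (isOfFinOrder_iff_eq_one _).mp <|
      ((MonoidHom.fst _ _).comp φ.toMonoidHom).isOfFinOrder ((CommGroup.mem_torsion g).mp hfo)
  exact φ.map_eq_one_iff.mp (Prod.ext hfree hg)

lemma QuotientGroup.isOfFinOrder_mk_of_mem {G : Type*} [Group G] {H K : Subgroup G} [H.Normal]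
    [(H.subgroupOf K).FiniteIndex] {g : G} (hg : g ∈ K) : IsOfFinOrder (g : G ⧸ H) :=
  isOfFinOrder_iff_pow_eq_one.mpr
    ⟨H.relIndex K, Nat.pos_of_ne_zero Subgroup.FiniteIndex.index_ne_zero,
      (QuotientGroup.eq_one_iff _).mpr (H.pow_relIndex_mem hg)⟩

theorem fg_abelian_profinite_topology_induces_on_subgroup_general
    {A : Type*} [CommGroup A] [Group.FG A]
    (B C : Subgroup A)
    (hfin : (C.subgroupOf B).FiniteIndex) :
    ∃ D : Subgroup A, D.FiniteIndex ∧ D ⊓ B ≤ C := by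
  obtain ⟨K, hK, hKtors⟩ := CommGroup.exists_finiteIndex_disjoint_torsion (A ⧸ C)
  refine ⟨K.comap (QuotientGroup.mk' C), ?_, ?_⟩
  · constructor
    rw [Subgroup.index_comap_of_surjective _ (QuotientGroup.mk'_surjective C)]
    exact hK.index_ne_zero
  · rintro a ⟨haD, haB⟩
    have htors : (a : A ⧸ C) ∈ CommGroup.torsion (A ⧸ C) :=
      (CommGroup.mem_torsion _).mpr (QuotientGroup.isOfFinOrder_mk_of_mem haB)
    exact (QuotientGroup.eq_one_iff a).mp (Subgroup.disjoint_def.mp hKtors haD htors)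

/-- Every finite-index subgroup `C` of a subgroup `B` of a finitely generated abelian
group `A` is the trace on `B` of a finite-index subgroup `D` of `A`: the profinite
topology of `A` induces on `B` its full profinite topology. -/
theorem fg_abelian_profinite_topology_induces_on_subgroup
    {A : Type*} [CommGroup A] [Group.FG A]
    (B C : Subgroup A) (hCB : C ≤ B)
    (hfin : (C.subgroupOf B).FiniteIndex) :
    ∃ D : Subgroup A, D.FiniteIndex ∧ D ⊓ B ≤ C :=
  fg_abelian_profinite_topology_induces_on_subgroup_general B C hfin
end

section
/- Let A be a finitely generated abelian group endowed with an action of a finite group G by group automorphisms, and let A^G = {a ∈ A : g·a = a for all g ∈ G} be the subgroup of G-invariants. Then for every subgroup C of A^G of finite index in A^G, there exists a G-invariant subgroup D of A of finite index in A such that D ∩ A^G ≤ C. -/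
/-!
Let `Q = A ⧸ C`. Its torsion subgroup is finite, say of exponent `e`, and the preimage `D` of
`Qᵉ` has finite index in `A`. An element of `D ⊓ A^G` maps to an `e`-th power which is torsion
(as `C` has finite index in `A^G`), hence to `1`. Intersecting the finitely many translates
`g • D` makes `D` invariant without losing finite index.
-/

open Pointwise

namespace CommGroup

variable {A : Type*} [CommGroup A]

theorem fg_subgroup [Group.FG A] (T : Subgroup A) : Group.FG T := by
  rw [Group.fg_iff_subgroup_fg, Subgroup.fg_iff_add_fg]
  exact (Submodule.fg_iff_addSubgroup_fg _).mp
    (IsNoetherian.noetherian (AddSubgroup.toIntSubmodule T.toAddSubgroup))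

theorem finite_torsion [Group.FG A] : Finite (torsion A) :=
  have := fg_subgroup (torsion A)
  finite_of_fg_isMulTorsion _ fun x => Submonoid.isOfFinOrder_coe.mp x.2

/-- An `e`-th power that is torsion comes from a torsion element, which `e` then kills. -/
theorem pow_exponent_torsion_eq_one {y : A} (hy : y ^ Monoid.exponent (torsion A) ∈ torsion A)
    (he : Monoid.exponent (torsion A) ≠ 0) : y ^ Monoid.exponent (torsion A) = 1 := by
  have hyT : y ∈ torsion A := IsOfFinOrder.of_pow hy he
  simpa using congrArg Subtype.val (Monoid.pow_exponent_eq_one (⟨y, hyT⟩ : torsion A))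

end CommGroup

namespace Subgroup

theorem exists_finiteIndex_inf_le {A : Type*} [CommGroup A] [Group.FG A]
    {C H : Subgroup A} (hC : (C.subgroupOf H).FiniteIndex) :
    ∃ D : Subgroup A, D.FiniteIndex ∧ D ⊓ H ≤ C := by
  have := CommGroup.finite_torsion (A := A ⧸ C)
  set e := Monoid.exponent (CommGroup.torsion (A ⧸ C))
  have he : e ≠ 0 := Monoid.exponent_ne_zero_of_finite
  refine ⟨(powMonoidHom e).range.comap (QuotientGroup.mk' C), ?_, ?_⟩
  · have := finiteIndex_range_powMonoidHom_of_fg (A ⧸ C) he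
    constructor
    rw [index_comap_of_surjective _ (QuotientGroup.mk'_surjective C)]
    exact FiniteIndex.index_ne_zero
  · rintro a ⟨⟨y, hya : y ^ e = a⟩, haH⟩
    have haC : a ^ (C.subgroupOf H).index ∈ C := by
      simpa [mem_subgroupOf] using (C.subgroupOf H).pow_index_mem ⟨a, haH⟩
    have hy_torsion : y ^ e ∈ CommGroup.torsion (A ⧸ C) := by
      refine isOfFinOrder_iff_pow_eq_one.mpr ⟨_, Nat.pos_of_ne_zero hC.index_ne_zero, ?_⟩
      rw [hya, ← QuotientGroup.mk_pow, QuotientGroup.eq_one_iff]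
      exact haC
    rw [← QuotientGroup.eq_one_iff, ← hya]
    exact CommGroup.pow_exponent_torsion_eq_one hy_torsion he

variable {G A : Type*} [Group G] [Group A] [MulDistribMulAction G A]

theorem index_smul (g : G) (D : Subgroup A) : (g • D).index = D.index :=
  D.index_map_of_bijective (MulAction.bijective g)

theorem smul_coe_iInf_smul (g : G) (D : Subgroup A) :
    g • ((⨅ h : G, h • D : Subgroup A) : Set A) = ((⨅ h : G, h • D : Subgroup A) : Set A) := by
  simp only [coe_iInf, coe_pointwise_smul, Set.smul_set_iInter, smul_smul]
  exact (Equiv.mulLeft g).iInf_comp (g := fun h => h • (D : Set A))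

end Subgroup

theorem invariants_finite_index_trace_general
    {A : Type*} [CommGroup A] [Group.FG A]
    {G : Type*} [Group G] [Finite G] [MulDistribMulAction G A]
    (AG : Subgroup A)
    (C : Subgroup A)
    (hfin : (C.subgroupOf AG).FiniteIndex) :
    ∃ D : Subgroup A, (∀ g : G, g • (D : Set A) = (D : Set A)) ∧
      D.FiniteIndex ∧ D ⊓ AG ≤ C := by
  obtain ⟨D, hD, hDC⟩ := Subgroup.exists_finiteIndex_inf_le hfin
  refine ⟨⨅ g : G, g • D, fun g => Subgroup.smul_coe_iInf_smul g D, ?_, ?_⟩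
  · exact Subgroup.finiteIndex_iInf fun g =>
      ⟨by rw [Subgroup.index_smul]; exact hD.index_ne_zero⟩
  · refine le_trans (inf_le_inf_right AG ?_) hDC
    simpa using iInf_le (fun g : G => g • D) 1

/-- For a finitely generated abelian group `A` with an action of a finite group `G` by
automorphisms, every finite-index subgroup `C` of the invariants `A^G` is the trace on
`A^G` of a `G`-invariant finite-index subgroup `D` of `A`. -/
theorem invariants_finite_index_trace
    {A : Type*} [CommGroup A] [Group.FG A]
    {G : Type*} [Group G] [Finite G] [MulDistribMulAction G A]
    (AG : Subgroup A) (hAG : ∀ a : A, a ∈ AG ↔ ∀ g : G, g • a = a)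
    (C : Subgroup A) (hCAG : C ≤ AG)
    (hfin : (C.subgroupOf AG).FiniteIndex) :
    ∃ D : Subgroup A, (∀ g : G, g • (D : Set A) = (D : Set A)) ∧
      D.FiniteIndex ∧ D ⊓ AG ≤ C :=
  invariants_finite_index_trace_general AG C hfin
end
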